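/- (Inverse weighted Fermat–Torricelli problem for three non-collinear points.) Let A_1A_2A_3 be a non-degenerate triangle in ℝ², let A_0 be a point in its interior, and let c > 0; write α_{i0j} = ∠A_iA_0A_j. Then there exists a unique triple of positive weights (B̄_1, B̄_2, B̄_3) with B̄_1 + B̄_2 + B̄_3 = c such that A_0 minimizes X ↦ Σ_{i=1}^3 B̄_i‖X − A_i‖, and it is given by B̄_i = c / (1 + sin α_{j0i}/sin α_{j0k} + sin α_{k0i}/sin α_{j0k}) for {i,j,k} = {1,2,3}; equivalently B̄_i = c·sin α_{j0k} / (sin α_{j0k} + sin α_{i0j} + sin α_{i0k}). -/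

import Mathlib

/-!
Away from the points `A i`, the function `X ↦ ∑ B i ‖X - A i‖` is differentiable with
derivative `⟪∑ B i uᵢ, ·⟫`, where `uᵢ` is the unit vector from `A i` to `X`, and by
Cauchy–Schwarz each `‖X - A i‖` lies above its tangent plane at `A₀`; hence `A₀` is a minimizer
exactly when the forces `B i uᵢ` balance. Pairing the balance equation with `u_k`
under the area form gives the law of sines `B i sin α_{i0k} = B j sin α_{j0k}`,
which together with `∑ B i = c` forces the stated formula. Conversely, if `w i > 0` are the
barycentric coordinates of `A₀`, then `∑ w i (A₀ - A i) = 0`, so the weights proportional to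
`w i ‖A₀ - A i‖` balance.
-/

open EuclideanGeometry Module
open scoped RealInnerProductSpace

def IsWeightedFermatPoint {ι E : Type*} [Fintype ι] [SeminormedAddCommGroup E]
    (A : ι → E) (B : ι → ℝ) (x : E) : Prop :=
  ∀ y, ∑ i, B i * ‖x - A i‖ ≤ ∑ i, B i * ‖y - A i‖

section FermatPoint

variable {ι E : Type*} [Fintype ι] [NormedAddCommGroup E] [InnerProductSpace ℝ E]

theorem hasFDerivAt_norm_sub {x a : E} (h : x ≠ a) :
    HasFDerivAt (fun y => ‖y - a‖) (‖x - a‖⁻¹ • innerSL ℝ (x - a)) x := by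
  have hsq := (hasStrictFDerivAt_norm_sq (x - a)).hasFDerivAt.comp x
    ((hasFDerivAt_id x).sub_const a)
  have hsqrt := hsq.sqrt (by simpa [sub_eq_zero] using h)
  simp only [Function.comp_def, id, Real.sqrt_sq (norm_nonneg _)] at hsqrt
  convert hsqrt using 1
  ext v
  simp only [smul_apply, ContinuousLinearMap.comp_id, coe_innerSL_apply, smul_eq_mul, one_div,
    mul_inv_rev, nsmul_eq_mul, Nat.cast_ofNat]
  ring

theorem norm_sub_add_inner_le (x y a : E) :
    ‖x - a‖ + ⟪‖x - a‖⁻¹ • (x - a), y - x⟫ ≤ ‖y - a‖ := by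
  set u := ‖x - a‖⁻¹ • (x - a)
  have hu : ‖u‖ ≤ 1 := by
    rw [norm_smul, norm_inv, norm_norm]
    exact inv_mul_le_one_of_le₀ le_rfl (norm_nonneg _)
  have hux : ⟪u, x - a⟫ = ‖x - a‖ := by
    rw [real_inner_smul_left, real_inner_self_eq_norm_sq]
    rcases eq_or_ne ‖x - a‖ 0 with h | h
    · simp [h]
    · field_simp
  calc ‖x - a‖ + ⟪u, y - x⟫ = ⟪u, y - a⟫ := by
        rw [← hux, ← inner_add_right, sub_add_sub_cancel']
    _ ≤ ‖u‖ * ‖y - a‖ := real_inner_le_norm u (y - a)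
    _ ≤ ‖y - a‖ := mul_le_of_le_one_left (norm_nonneg _) hu

theorem isWeightedFermatPoint_of_sum_smul_eq_zero {A : ι → E} {B : ι → ℝ} {x : E}
    (hB : ∀ i, 0 ≤ B i) (h : ∑ i, B i • ‖x - A i‖⁻¹ • (x - A i) = 0) :
    IsWeightedFermatPoint A B x := by
  intro y
  have hinner : ∑ i, B i * ⟪‖x - A i‖⁻¹ • (x - A i), y - x⟫ = 0 := by
    simp_rw [← real_inner_smul_left, ← sum_inner, h, inner_zero_left]
  calc ∑ i, B i * ‖x - A i‖
      = ∑ i, B i * (‖x - A i‖ + ⟪‖x - A i‖⁻¹ • (x - A i), y - x⟫) := by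
        simp_rw [mul_add, Finset.sum_add_distrib, hinner, add_zero]
    _ ≤ ∑ i, B i * ‖y - A i‖ := Finset.sum_le_sum fun i _ =>
        mul_le_mul_of_nonneg_left (norm_sub_add_inner_le x y (A i)) (hB i)

theorem IsWeightedFermatPoint.sum_smul_eq_zero {A : ι → E} {B : ι → ℝ} {x : E}
    (h : IsWeightedFermatPoint A B x) (hx : ∀ i, x ≠ A i) :
    ∑ i, B i • ‖x - A i‖⁻¹ • (x - A i) = 0 := by
  have hderiv : HasFDerivAt (fun y => ∑ i, B i * ‖y - A i‖)
      (∑ i, B i • ‖x - A i‖⁻¹ • innerSL ℝ (x - A i)) x :=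
    HasFDerivAt.fun_sum fun i _ => (hasFDerivAt_norm_sub (hx i)).const_mul (B i)
  have hmin : IsLocalMin (fun y => ∑ i, B i * ‖y - A i‖) x := .of_forall fun y => h y
  have hzero := hmin.hasFDerivAt_eq_zero hderiv
  simp_rw [← map_smul, ← map_sum] at hzero
  rw [← norm_eq_zero, ← innerSL_apply_norm ℝ, hzero, norm_zero]

theorem exists_isWeightedFermatPoint_of_sum_smul_eq_zero [Nonempty ι] {A : ι → E} {x : E}
    {w : ι → ℝ} (hw : ∀ i, 0 < w i) (hx : ∀ i, x ≠ A i)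
    (hsum : ∑ i, w i • (x - A i) = 0) {c : ℝ} (hc : 0 < c) :
    ∃ B : ι → ℝ, (∀ i, 0 < B i) ∧ ∑ i, B i = c ∧ IsWeightedFermatPoint A B x := by
  have hd : ∀ i, 0 < ‖x - A i‖ := fun i => norm_pos_iff.mpr (sub_ne_zero.mpr (hx i))
  set D := ∑ i, w i * ‖x - A i‖
  have hD : 0 < D := Finset.sum_pos (fun i _ => mul_pos (hw i) (hd i)) Finset.univ_nonempty
  have hB : ∀ i, 0 < c / D * (w i * ‖x - A i‖) := fun i => by
    have := hw i; have := hd i; positivity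
  refine ⟨fun i => c / D * (w i * ‖x - A i‖), hB, ?_,
    isWeightedFermatPoint_of_sum_smul_eq_zero (fun i => (hB i).le) ?_⟩
  · rw [← Finset.mul_sum]
    exact div_mul_cancel₀ c hD.ne'
  · calc ∑ i, (c / D * (w i * ‖x - A i‖)) • ‖x - A i‖⁻¹ • (x - A i)
        = (c / D) • ∑ i, w i • (x - A i) := by
          rw [Finset.smul_sum]
          refine Finset.sum_congr rfl fun i _ => ?_
          rw [smul_smul, smul_smul]
          congr 1
          field_simp [(hd i).ne']
      _ = 0 := by rw [hsum, smul_zero]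

end FermatPoint

theorem Fin.sum_univ_three_of_ne {M : Type*} [AddCommMonoid M] (f : Fin 3 → M) {i j k : Fin 3}
    (hij : i ≠ j) (hik : i ≠ k) (hjk : j ≠ k) : ∑ n, f n = f i + f j + f k := by
  have huniv : (Finset.univ : Finset (Fin 3)) = {i, j, k} := by
    ext n
    simp only [Finset.mem_univ, Finset.mem_insert, Finset.mem_singleton, true_iff]
    omega
  rw [huniv, Finset.sum_insert (by simp [hij, hik]), Finset.sum_pair hjk, add_assoc]

section Plane

variable {E : Type*} [NormedAddCommGroup E] [InnerProductSpace ℝ E] [Fact (finrank ℝ E = 2)]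

theorem Orientation.abs_areaForm_eq_sin_angle_mul_norm_mul_norm (o : Orientation ℝ E (Fin 2))
    (x y : E) :
    |o.areaForm x y| = Real.sin (InnerProductGeometry.angle x y) * (‖x‖ * ‖y‖) := by
  rw [InnerProductGeometry.sin_angle_mul_norm_mul_norm, real_inner_self_eq_norm_sq,
    real_inner_self_eq_norm_sq, ← Real.sqrt_sq_eq_abs, ← o.inner_sq_add_areaForm_sq]
  ring_nf

theorem abs_mul_norm_mul_sin_angle_eq_of_sum_smul_eq_zero {v : Fin 3 → E} {b : Fin 3 → ℝ}
    (h : ∑ n, b n • v n = 0) {i j k : Fin 3} (hij : i ≠ j) (hik : i ≠ k) (hjk : j ≠ k)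
    (hk : v k ≠ 0) :
    |b i| * ‖v i‖ * Real.sin (InnerProductGeometry.angle (v i) (v k)) =
      |b j| * ‖v j‖ * Real.sin (InnerProductGeometry.angle (v j) (v k)) := by
  have := FiniteDimensional.of_fact_finrank_eq_two (K := ℝ) (V := E)
  let o : Orientation ℝ E (Fin 2) := (finBasisOfFinrankEq ℝ E Fact.out).orientation
  have hω : b i * o.areaForm (v i) (v k) = -(b j * o.areaForm (v j) (v k)) := by
    have := congrArg (fun w => o.areaForm w (v k)) h
    simp only [Fin.sum_univ_three_of_ne _ hij hik hjk, map_add, map_smul, o.areaForm_apply_self,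
      LinearMap.add_apply, LinearMap.smul_apply, smul_eq_mul, mul_zero, add_zero, map_zero,
      LinearMap.zero_apply] at this
    linear_combination this
  have habs := congrArg abs hω
  rw [abs_neg, abs_mul, abs_mul, o.abs_areaForm_eq_sin_angle_mul_norm_mul_norm,
    o.abs_areaForm_eq_sin_angle_mul_norm_mul_norm] at habs
  have hk' : ‖v k‖ ≠ 0 := norm_ne_zero_iff.mpr hk
  apply mul_right_cancel₀ hk'
  linear_combination habs

end Plane

namespace AffineBasis

variable {ι k V P : Type*}

theorem sum_coord_smul_sub_eq_zero [Fintype ι] [Ring k] [AddCommGroup V] [Module k V]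
    (b : AffineBasis ι k V) (v : V) : ∑ i, b.coord i v • (v - b i) = 0 := by
  simp [smul_sub, Finset.sum_sub_distrib, ← Finset.sum_smul, b.sum_coord_apply_eq_one]

variable [DivisionRing k] [AddCommGroup V] [Module k V] [AddTorsor V P]

theorem coord_eq_zero_of_mem_affineSpan_pair (b : AffineBasis ι k P) {i j l : ι} (hli : l ≠ i)
    (hlj : l ≠ j) {p : P} (hp : p ∈ line[k, b i, b j]) : b.coord l p = 0 := by
  obtain ⟨r, rfl⟩ := mem_affineSpan_pair_iff_exists_lineMap_eq.mp hp
  simp [AffineMap.apply_lineMap, b.coord_apply_ne hli, b.coord_apply_ne hlj]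

theorem not_collinear_of_coord_ne_zero (b : AffineBasis ι k P) {i j l : ι} (hij : i ≠ j)
    (hli : l ≠ i) (hlj : l ≠ j) {p : P} (hp : b.coord l p ≠ 0) :
    ¬Collinear k {b i, p, b j} := fun hcol =>
  hp <| b.coord_eq_zero_of_mem_affineSpan_pair hli hlj <|
    hcol.mem_affineSpan_of_mem_of_ne (by simp) (by simp) (by simp) (b.ind.injective.ne hij)

end AffineBasis

theorem AffineIndependent.exists_affineBasis_coord_pos {ι E : Type*} [Fintype ι]
    [NormedAddCommGroup E] [NormedSpace ℝ E] [FiniteDimensional ℝ E] {A : ι → E}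
    (hA : AffineIndependent ℝ A) {x : E} (hx : x ∈ interior (convexHull ℝ (Set.range A))) :
    ∃ b : AffineBasis ι ℝ E, ⇑b = A ∧ ∀ i, 0 < b.coord i x := by
  let b : AffineBasis ι ℝ E :=
    ⟨A, hA, interior_convexHull_nonempty_iff_affineSpan_eq_top.mp ⟨x, hx⟩⟩
  refine ⟨b, rfl, ?_⟩
  have hb : x ∈ interior (convexHull ℝ (Set.range b)) := hx
  rwa [b.interior_convexHull] at hb

section PlaneTriangle

variable {E : Type*} [NormedAddCommGroup E] [InnerProductSpace ℝ E] [Fact (finrank ℝ E = 2)]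
  {A : Fin 3 → E} {B : Fin 3 → ℝ} {x : E}

theorem IsWeightedFermatPoint.mul_sin_angle_eq (h : IsWeightedFermatPoint A B x)
    (hB : ∀ n, 0 ≤ B n) (hx : ∀ n, x ≠ A n) {i j k : Fin 3} (hij : i ≠ j) (hik : i ≠ k)
    (hjk : j ≠ k) : B i * Real.sin (∠ (A i) x (A k)) = B j * Real.sin (∠ (A j) x (A k)) := by
  have hsum : ∑ n, (B n * ‖x - A n‖⁻¹) • (x - A n) = 0 := by
    simpa only [smul_smul] using h.sum_smul_eq_zero hx
  have hsin := abs_mul_norm_mul_sin_angle_eq_of_sum_smul_eq_zero hsum hij hik hjk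
    (sub_ne_zero.mpr (hx k))
  have hangle : ∀ n, ∠ (A n) x (A k) = InnerProductGeometry.angle (x - A n) (x - A k) :=
    fun n => by
      rw [EuclideanGeometry.angle, ← InnerProductGeometry.angle_neg_neg, vsub_eq_sub, vsub_eq_sub,
        neg_sub, neg_sub]
  have hweight : ∀ n, |B n * ‖x - A n‖⁻¹| * ‖x - A n‖ = B n := fun n => by
    have hd : ‖x - A n‖ ≠ 0 := norm_ne_zero_iff.mpr (sub_ne_zero.mpr (hx n))
    rw [abs_of_nonneg (by have := hB n; positivity)]
    field_simp
  simpa only [hangle, hweight] using hsin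

theorem IsWeightedFermatPoint.eq_mul_sin_div (h : IsWeightedFermatPoint A B x)
    (hB : ∀ n, 0 ≤ B n) (hx : ∀ n, x ≠ A n) {c : ℝ} (hc : ∑ n, B n = c) {i j k : Fin 3}
    (hij : i ≠ j) (hik : i ≠ k) (hjk : j ≠ k) (hsin : 0 < Real.sin (∠ (A j) x (A k))) :
    B i = c * Real.sin (∠ (A j) x (A k)) / (Real.sin (∠ (A j) x (A k))
      + Real.sin (∠ (A i) x (A j)) + Real.sin (∠ (A i) x (A k))) := by
  have hik' := h.mul_sin_angle_eq hB hx hij hik hjk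
  have hij' := h.mul_sin_angle_eq hB hx hik hij hjk.symm
  rw [angle_comm (A k) x (A j)] at hij'
  rw [Fin.sum_univ_three_of_ne B hij hik hjk] at hc
  have : 0 ≤ Real.sin (∠ (A i) x (A j)) := InnerProductGeometry.sin_angle_nonneg _ _
  have : 0 ≤ Real.sin (∠ (A i) x (A k)) := InnerProductGeometry.sin_angle_nonneg _ _
  rw [eq_div_iff (by positivity)]
  linear_combination hik' + hij' + Real.sin (∠ (A j) x (A k)) * hc

end PlaneTriangle

/-- Inverse weighted Fermat–Torricelli problem for three non-collinear points: for an
interior point `A₀` of a non-degenerate triangle and `c > 0` there is a unique triple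
of positive weights summing to `c` for which `A₀` is the weighted Fermat–Torricelli
point, and it is given by the explicit formulas in terms of the angles `α_{i0j}`.
Indices are shifted: `A 0, A 1, A 2` are `A₁, A₂, A₃`. -/
theorem inverse_weighted_fermat_torricelli_triangle
    (A : Fin 3 → EuclideanSpace ℝ (Fin 2))
    (hA : AffineIndependent ℝ A)
    (A₀ : EuclideanSpace ℝ (Fin 2))
    (hA₀ : A₀ ∈ interior (convexHull ℝ (Set.range A)))
    (c : ℝ) (hc : 0 < c) :
    (∃! B : Fin 3 → ℝ, (∀ i, 0 < B i) ∧ (∑ i, B i = c) ∧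
        ∀ X : EuclideanSpace ℝ (Fin 2),
          ∑ i, B i * ‖A₀ - A i‖ ≤ ∑ i, B i * ‖X - A i‖) ∧
    ∀ B : Fin 3 → ℝ, (∀ i, 0 < B i) → (∑ i, B i = c) →
      (∀ X : EuclideanSpace ℝ (Fin 2),
        ∑ i, B i * ‖A₀ - A i‖ ≤ ∑ i, B i * ‖X - A i‖) →
      ∀ i j k : Fin 3, i ≠ j → i ≠ k → j ≠ k →
        B i = c / (1 + Real.sin (∠ (A j) A₀ (A i)) / Real.sin (∠ (A j) A₀ (A k))
            + Real.sin (∠ (A k) A₀ (A i)) / Real.sin (∠ (A j) A₀ (A k))) ∧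
        B i = c * Real.sin (∠ (A j) A₀ (A k))
            / (Real.sin (∠ (A j) A₀ (A k)) + Real.sin (∠ (A i) A₀ (A j))
              + Real.sin (∠ (A i) A₀ (A k))) := by
  have : Fact (finrank ℝ (EuclideanSpace ℝ (Fin 2)) = 2) := ⟨finrank_euclideanSpace_fin⟩
  obtain ⟨b, rfl, hb⟩ := hA.exists_affineBasis_coord_pos hA₀
  have hncol : ∀ i j, i ≠ j → ¬Collinear ℝ {b i, A₀, b j} := fun i j hij => by
    obtain ⟨l, hli, hlj⟩ : ∃ l, l ≠ i ∧ l ≠ j := by revert i j; decide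
    exact b.not_collinear_of_coord_ne_zero hij hli hlj (hb l).ne'
  have hne : ∀ i, A₀ ≠ b i := fun i heq => by
    obtain ⟨j, hij⟩ := exists_ne i
    exact hncol i j hij.symm (by simp [heq, collinear_pair])
  have hformula : ∀ B : Fin 3 → ℝ, (∀ i, 0 < B i) → ∑ i, B i = c →
      IsWeightedFermatPoint b B A₀ → ∀ i j k, i ≠ j → i ≠ k → j ≠ k →
      B i = c * Real.sin (∠ (b j) A₀ (b k)) / (Real.sin (∠ (b j) A₀ (b k))
        + Real.sin (∠ (b i) A₀ (b j)) + Real.sin (∠ (b i) A₀ (b k))) :=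
    fun B hB hBsum hBmin i j k hij hik hjk => hBmin.eq_mul_sin_div (fun n => (hB n).le) hne
      hBsum hij hik hjk (sin_pos_of_not_collinear (hncol j k hjk))
  obtain ⟨B₀, hB₀⟩ := exists_isWeightedFermatPoint_of_sum_smul_eq_zero hb hne
    (b.sum_coord_smul_sub_eq_zero A₀) hc
  refine ⟨⟨B₀, hB₀, fun B ⟨hB, hBsum, hBmin⟩ => funext fun i => ?_⟩,
    fun B hB hBsum hBmin i j k hij hik hjk =>
      ⟨?_, hformula B hB hBsum hBmin i j k hij hik hjk⟩⟩
  · obtain ⟨j, k, hij, hik, hjk⟩ : ∃ j k : Fin 3, i ≠ j ∧ i ≠ k ∧ j ≠ k := by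
      revert i; decide
    rw [hformula B hB hBsum hBmin i j k hij hik hjk,
      hformula B₀ hB₀.1 hB₀.2.1 hB₀.2.2 i j k hij hik hjk]
  · have := sin_pos_of_not_collinear (hncol j k hjk)
    rw [hformula B hB hBsum hBmin i j k hij hik hjk, angle_comm (b j) A₀ (b i),
      angle_comm (b k) A₀ (b i)]
    field_simp
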